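/- arXiv:math/9810072 — 3 statements merged into one kernel-verified Lean document; each statement's English description precedes it below -/
import Mathlib

section
/- Let (X, 𝒯) be an α-subparacompact space and let A ⊆ X be F_σ-gα-closed (i.e. a countable union of gα-closed sets). Then the subspace (A, 𝒯|A) is α-subparacompact. -/
open Set TopologicalSpace

universe u v

variable {X : Type u} {Y : Type v}

/-- A set is an α-set (α-open) w.r.t. the topology `T` if `A ⊆ Int (Cl (Int A))`. -/
def AlphaOpen (T : TopologicalSpace X) (A : Set X) : Prop :=
  letI := T
  A ⊆ interior (closure (interior A))

/-- The α-topology `𝒯^α`, whose open sets are exactly the α-sets of `T`. -/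
def alphaTop (T : TopologicalSpace X) : TopologicalSpace X :=
  letI := T
  { IsOpen := fun A => A ⊆ interior (closure (interior A))
    isOpen_univ := by simp
    isOpen_inter := by
      intro A B hA hB
      have hsub : interior (closure (interior A)) ∩ interior (closure (interior B)) ⊆
          closure (interior (A ∩ B)) := by
        intro x hx
        have h1 : interior (closure (interior B)) ∩ closure (interior A) ⊆
            closure (interior (closure (interior B)) ∩ interior A) :=
          isOpen_interior.inter_closure
        have h2 : interior (closure (interior B)) ∩ interior A ⊆
            closure (interior A ∩ interior B) := by
          intro y hy
          have h : interior A ∩ closure (interior B) ⊆ closure (interior A ∩ interior B) :=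
            isOpen_interior.inter_closure
          exact h ⟨hy.2, interior_subset hy.1⟩
        have h3 : closure (interior (closure (interior B)) ∩ interior A) ⊆
            closure (interior A ∩ interior B) := by
          calc closure (interior (closure (interior B)) ∩ interior A)
              ⊆ closure (closure (interior A ∩ interior B)) := closure_mono h2
            _ = closure (interior A ∩ interior B) := closure_closure
        have hx' : x ∈ closure (interior A ∩ interior B) :=
          h3 (h1 ⟨hx.2, interior_subset hx.1⟩)
        rwa [← interior_inter] at hx'
      intro x hx
      exact interior_maximal hsub (isOpen_interior.inter isOpen_interior) ⟨hA hx.1, hB hx.2⟩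
    isOpen_sUnion := by
      intro S hS x hx
      obtain ⟨t, htS, hxt⟩ := hx
      have h : interior (closure (interior t)) ⊆ interior (closure (interior (⋃₀ S))) :=
        interior_mono (closure_mono (interior_mono (subset_sUnion_of_mem htS)))
      exact h (hS t htS hxt) }

/-- `A` is semi-open w.r.t. `T` if `A ⊆ Cl (Int A)`. -/
def SemiOpen (T : TopologicalSpace X) (A : Set X) : Prop :=
  letI := T
  A ⊆ closure (interior A)

/-- `A` is semi-closed if its complement is semi-open. -/
def SemiClosed (T : TopologicalSpace X) (A : Set X) : Prop :=
  SemiOpen T Aᶜ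

/-- The semi-closure of `A`: the intersection of all semi-closed sets containing `A`. -/
def sCl (T : TopologicalSpace X) (A : Set X) : Set X :=
  ⋂₀ {C | SemiClosed T C ∧ A ⊆ C}

/-- `A` is sg-closed if `sCl A ⊆ U` whenever `A ⊆ U` with `U` semi-open. -/
def SgClosed (T : TopologicalSpace X) (A : Set X) : Prop :=
  ∀ U : Set X, SemiOpen T U → A ⊆ U → sCl T A ⊆ U

/-- `A` is sg-open if its complement is sg-closed. -/
def SgOpen (T : TopologicalSpace X) (A : Set X) : Prop :=
  SgClosed T Aᶜ

/-- `A` is regular closed w.r.t. `T` if `A = Cl (Int A)`. -/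
def RegClosed (T : TopologicalSpace X) (A : Set X) : Prop :=
  letI := T
  A = closure (interior A)

/-- A family `𝒱` refines a family `𝒰` if every member of `𝒱` is contained in a member of `𝒰`. -/
def Refines (𝒱 𝒰 : Set (Set X)) : Prop :=
  ∀ V ∈ 𝒱, ∃ U ∈ 𝒰, V ⊆ U

/-- A family of sets is locally finite if every point has a neighbourhood
meeting only finitely many members. -/
def LocFinite (T : TopologicalSpace X) (𝒱 : Set (Set X)) : Prop :=
  ∀ x : X, ∃ N ∈ @nhds X T x, {V ∈ 𝒱 | (V ∩ N).Nonempty}.Finite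

/-- A family of sets is locally countable if every point has a neighbourhood
meeting only countably many members. -/
def LocCountable (T : TopologicalSpace X) (𝒱 : Set (Set X)) : Prop :=
  ∀ x : X, ∃ N ∈ @nhds X T x, {V ∈ 𝒱 | (V ∩ N).Nonempty}.Countable

/-- A family of sets is discrete if every point has a neighbourhood
meeting at most one member. -/
def DiscreteFam (T : TopologicalSpace X) (𝒱 : Set (Set X)) : Prop :=
  ∀ x : X, ∃ N ∈ @nhds X T x, {V ∈ 𝒱 | (V ∩ N).Nonempty}.Subsingleton

/-- A family is σ-discrete if it is a countable union of discrete families. -/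
def SigmaDiscrete (T : TopologicalSpace X) (𝒱 : Set (Set X)) : Prop :=
  ∃ 𝒲 : ℕ → Set (Set X), 𝒱 = ⋃ n, 𝒲 n ∧ ∀ n, DiscreteFam T (𝒲 n)

/-- A family is closure-preserving if for every subfamily the closure of the
union is the union of the closures. -/
def ClosurePreserving (T : TopologicalSpace X) (𝒲 : Set (Set X)) : Prop :=
  letI := T
  ∀ 𝒲' ⊆ 𝒲, closure (⋃₀ 𝒲') = ⋃ W ∈ 𝒲', closure W

/-- A family is σ-closure-preserving if it is a countable union of
closure-preserving families. -/
def SigmaClosurePreserving (T : TopologicalSpace X) (𝒱 : Set (Set X)) : Prop :=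
  ∃ 𝒲 : ℕ → Set (Set X), 𝒱 = ⋃ n, 𝒲 n ∧ ∀ n, ClosurePreserving T (𝒲 n)

/-- Semi-compact: every semi-open cover has a finite subcover. -/
def SemiCompact (T : TopologicalSpace X) : Prop :=
  ∀ 𝒰 : Set (Set X), (∀ U ∈ 𝒰, SemiOpen T U) → ⋃₀ 𝒰 = univ →
    ∃ 𝒱 ⊆ 𝒰, 𝒱.Finite ∧ ⋃₀ 𝒱 = univ

/-- S-closed: for every semi-open cover there is a finite subfamily
whose closures cover. -/
def SClosed (T : TopologicalSpace X) : Prop :=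
  letI := T
  ∀ 𝒰 : Set (Set X), (∀ U ∈ 𝒰, SemiOpen T U) → ⋃₀ 𝒰 = univ →
    ∃ 𝒱 ⊆ 𝒰, 𝒱.Finite ∧ (⋃ V ∈ 𝒱, closure V) = univ

/-- s-closed: for every semi-open cover there is a finite subfamily
whose semi-closures cover. -/
def SmallSClosed (T : TopologicalSpace X) : Prop :=
  ∀ 𝒰 : Set (Set X), (∀ U ∈ 𝒰, SemiOpen T U) → ⋃₀ 𝒰 = univ →
    ∃ 𝒱 ⊆ 𝒰, 𝒱.Finite ∧ (⋃ V ∈ 𝒱, sCl T V) = univ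

/-- rc-Lindelöf: every regular closed cover has a countable subcover. -/
def RcLindelof (T : TopologicalSpace X) : Prop :=
  ∀ 𝒰 : Set (Set X), (∀ U ∈ 𝒰, RegClosed T U) → ⋃₀ 𝒰 = univ →
    ∃ 𝒱 ⊆ 𝒰, 𝒱.Countable ∧ ⋃₀ 𝒱 = univ

/-- sg-compact: every sg-open cover has a finite subcover. -/
def SgCompact (T : TopologicalSpace X) : Prop :=
  ∀ 𝒰 : Set (Set X), (∀ U ∈ 𝒰, SgOpen T U) → ⋃₀ 𝒰 = univ →
    ∃ 𝒱 ⊆ 𝒰, 𝒱.Finite ∧ ⋃₀ 𝒱 = univ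

/-- `A` is S-closed relative to `X`: every cover of `A` by semi-open sets of `X`
has a finite subfamily whose closures cover `A`. -/
def SClosedRel (T : TopologicalSpace X) (A : Set X) : Prop :=
  letI := T
  ∀ 𝒰 : Set (Set X), (∀ U ∈ 𝒰, SemiOpen T U) → A ⊆ ⋃₀ 𝒰 →
    ∃ 𝒱 ⊆ 𝒰, 𝒱.Finite ∧ A ⊆ ⋃ V ∈ 𝒱, closure V

/-- `A` is s-closed relative to `X`: every cover of `A` by semi-open sets of `X`
has a finite subfamily whose semi-closures cover `A`. -/
def SmallSClosedRel (T : TopologicalSpace X) (A : Set X) : Prop :=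
  ∀ 𝒰 : Set (Set X), (∀ U ∈ 𝒰, SemiOpen T U) → A ⊆ ⋃₀ 𝒰 →
    ∃ 𝒱 ⊆ 𝒰, 𝒱.Finite ∧ A ⊆ ⋃ V ∈ 𝒱, sCl T V

/-- Locally S-closed: every point has a neighbourhood which is S-closed relative to `X`. -/
def LocallySClosed (T : TopologicalSpace X) : Prop :=
  ∀ x : X, ∃ N ∈ @nhds X T x, SClosedRel T N

/-- Locally s-closed: every point has a neighbourhood which is s-closed relative to `X`. -/
def LocallySmallSClosed (T : TopologicalSpace X) : Prop :=
  ∀ x : X, ∃ N ∈ @nhds X T x, SmallSClosedRel T N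

/-- para-S-closed: every semi-open cover has a locally finite refinement by
semi-open sets whose union is dense. -/
def ParaSClosed (T : TopologicalSpace X) : Prop :=
  letI := T
  ∀ 𝒰 : Set (Set X), (∀ U ∈ 𝒰, SemiOpen T U) → ⋃₀ 𝒰 = univ →
    ∃ 𝒱 : Set (Set X), (∀ V ∈ 𝒱, SemiOpen T V) ∧ LocFinite T 𝒱 ∧ Refines 𝒱 𝒰 ∧
      closure (⋃₀ 𝒱) = univ

/-- para-rc-Lindelöf: every regular closed cover has a locally countable
refinement by regular closed sets. -/
def ParaRcLindelof (T : TopologicalSpace X) : Prop :=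
  ∀ 𝒰 : Set (Set X), (∀ U ∈ 𝒰, RegClosed T U) → ⋃₀ 𝒰 = univ →
    ∃ 𝒱 : Set (Set X), (∀ V ∈ 𝒱, RegClosed T V) ∧ LocCountable T 𝒱 ∧ Refines 𝒱 𝒰 ∧
      ⋃₀ 𝒱 = univ

/-- α-subparacompact: every α-open cover has a σ-discrete closed refinement covering `X`. -/
def AlphaSubparacompact (T : TopologicalSpace X) : Prop :=
  ∀ 𝒰 : Set (Set X), (∀ U ∈ 𝒰, AlphaOpen T U) → ⋃₀ 𝒰 = univ →
    ∃ 𝒱 : Set (Set X), (∀ V ∈ 𝒱, @IsClosed X T V) ∧ SigmaDiscrete T 𝒱 ∧ Refines 𝒱 𝒰 ∧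
      ⋃₀ 𝒱 = univ

/-- gα-closed: `Cl_α A ⊆ U` whenever `A ⊆ U` with `U` α-open. -/
def GAlphaClosed (T : TopologicalSpace X) (A : Set X) : Prop :=
  ∀ U : Set X, AlphaOpen T U → A ⊆ U → @closure X (alphaTop T) A ⊆ U

/-- α-paracompact: every α-open cover has a locally finite open refinement. -/
def AlphaParacompact (T : TopologicalSpace X) : Prop :=
  ∀ 𝒰 : Set (Set X), (∀ U ∈ 𝒰, AlphaOpen T U) → ⋃₀ 𝒰 = univ →
    ∃ 𝒱 : Set (Set X), (∀ V ∈ 𝒱, T.IsOpen V) ∧ LocFinite T 𝒱 ∧ Refines 𝒱 𝒰 ∧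
      ⋃₀ 𝒱 = univ

/-
If `B` is gα-closed and `𝒢` is an α-open family covering `B`, then `Cl_α B ⊆ ⋃ 𝒢`, so `𝒢`
together with the complement of `Cl_α B` is an α-open cover of `X`. In a σ-discrete closed
refinement of it, the members meeting `B` cannot lie in that complement: they refine `𝒢` and
cover `B`. An α-open cover of `A` consists of traces of α-open sets of `X` (an open set minus a
nowhere dense set is α-open, and a nowhere dense subset of `A` is nowhere dense in `X`); doing
the above for each `B n` and tracing on `A` gives a countable union of σ-discrete closed
refinements of the cover.
-/

section DiscreteFamilies

variable [tX : TopologicalSpace X] [tY : TopologicalSpace Y]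

theorem DiscreteFam.mono {𝒱 𝒲 : Set (Set X)} (h : 𝒱 ⊆ 𝒲) (h𝒲 : DiscreteFam tX 𝒲) :
    DiscreteFam tX 𝒱 := fun x =>
  let ⟨N, hN, hsub⟩ := h𝒲 x
  ⟨N, hN, hsub.anti fun _ hV => ⟨h hV.1, hV.2⟩⟩

theorem DiscreteFam.preimage {f : Y → X} (hf : Continuous f) {𝒲 : Set (Set X)}
    (h𝒲 : DiscreteFam tX 𝒲) : DiscreteFam tY (Set.preimage f '' 𝒲) := by
  intro y
  obtain ⟨N, hN, hsub⟩ := h𝒲 (f y)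
  refine ⟨f ⁻¹' N, hf.continuousAt.preimage_mem_nhds hN, ?_⟩
  rintro _ ⟨⟨W₁, hW₁, rfl⟩, z₁, hz₁⟩ _ ⟨⟨W₂, hW₂, rfl⟩, z₂, hz₂⟩
  rw [hsub ⟨hW₁, f z₁, hz₁⟩ ⟨hW₂, f z₂, hz₂⟩]

theorem SigmaDiscrete.mono {𝒱 𝒲 : Set (Set X)} (h : 𝒱 ⊆ 𝒲) (h𝒲 : SigmaDiscrete tX 𝒲) :
    SigmaDiscrete tX 𝒱 := by
  obtain ⟨𝒟, rfl, h𝒟⟩ := h𝒲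
  refine ⟨fun n => 𝒟 n ∩ 𝒱, ?_, fun n => (h𝒟 n).mono inter_subset_left⟩
  rw [← iUnion_inter, inter_eq_right.mpr h]

theorem SigmaDiscrete.preimage {f : Y → X} (hf : Continuous f) {𝒲 : Set (Set X)}
    (h𝒲 : SigmaDiscrete tX 𝒲) : SigmaDiscrete tY (Set.preimage f '' 𝒲) := by
  obtain ⟨𝒟, rfl, h𝒟⟩ := h𝒲
  exact ⟨fun n => Set.preimage f '' 𝒟 n, image_iUnion, fun n => (h𝒟 n).preimage hf⟩

theorem SigmaDiscrete.iUnion {𝒱 : ℕ → Set (Set X)} (h : ∀ n, SigmaDiscrete tX (𝒱 n)) :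
    SigmaDiscrete tX (⋃ n, 𝒱 n) := by
  choose 𝒟 h𝒟eq h𝒟 using h
  refine ⟨fun m => 𝒟 m.unpair.1 m.unpair.2, ?_, fun m => h𝒟 _ _⟩
  rw [iUnion_unpair]
  exact iUnion_congr h𝒟eq

end DiscreteFamilies

section AlphaOpen

variable [t : TopologicalSpace X]

theorem IsOpen.isNowhereDense_frontier {s : Set X} (hs : IsOpen s) :
    IsNowhereDense (frontier s) := by
  rw [isClosed_frontier.isNowhereDense_iff, ← frontier_compl]
  exact interior_frontier hs.isClosed_compl

theorem IsOpen.alphaOpen_diff {O N : Set X} (hO : IsOpen O) (hN : IsNowhereDense N) :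
    AlphaOpen t (O \ N) := by
  have hdense : Dense (closure N)ᶜ := interior_eq_empty_iff_dense_compl.mp hN
  have hO_sub : O ⊆ closure (interior (O \ N)) :=
    (hdense.open_subset_closure_inter hO).trans <| closure_mono <|
      interior_maximal (sdiff_subset_sdiff_right subset_closure) (hO.sdiff isClosed_closure)
  exact sdiff_subset.trans (interior_maximal hO_sub hO)

theorem AlphaOpen.exists_alphaOpen_preimage_val {A : Set X} {U : Set A}
    (hU : AlphaOpen (t.induced Subtype.val) U) :
    ∃ V : Set X, AlphaOpen t V ∧ Subtype.val ⁻¹' V = U := by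
  -- `U = O' \ (O' \ U)` with `O' = Int Cl Int U` open and `O' \ U` inside the frontier of `Int U`.
  set O' : Set A := interior (closure (interior U))
  obtain ⟨O, hO, hOO'⟩ : ∃ O : Set X, IsOpen O ∧ Subtype.val ⁻¹' O = O' :=
    isOpen_induced_iff.mp isOpen_interior
  have hN : IsNowhereDense (O' \ U) :=
    isOpen_interior.isNowhereDense_frontier.mono (s := frontier (interior U)) <|
      sdiff_subset_sdiff interior_subset (interior_subset.trans interior_subset)
  refine ⟨O \ Subtype.val '' (O' \ U), hO.alphaOpen_diff hN.image_val, ?_⟩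
  rw [preimage_sdiff, hOO', Subtype.val_injective.preimage_image, sdiff_sdiff_cancel_left hU]

theorem GAlphaClosed.exists_sigmaDiscrete_closed_refinement (hX : AlphaSubparacompact t)
    {B : Set X} (hB : GAlphaClosed t B) {𝒢 : Set (Set X)} (h𝒢 : ∀ G ∈ 𝒢, AlphaOpen t G)
    (hB𝒢 : B ⊆ ⋃₀ 𝒢) :
    ∃ 𝒱 : Set (Set X), (∀ V ∈ 𝒱, IsClosed V) ∧ SigmaDiscrete t 𝒱 ∧ Refines 𝒱 𝒢 ∧
      B ⊆ ⋃₀ 𝒱 := by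
  set C := @closure X (alphaTop t) B
  have hC : C ⊆ ⋃₀ 𝒢 := hB _ (@isOpen_sUnion X (alphaTop t) 𝒢 h𝒢) hB𝒢
  have hα : ∀ U ∈ insert Cᶜ 𝒢, AlphaOpen t U :=
    forall_mem_insert.mpr ⟨(@isClosed_closure X (alphaTop t) B).isOpen_compl, h𝒢⟩
  have hcover : ⋃₀ insert Cᶜ 𝒢 = univ := by
    rw [sUnion_insert, ← compl_subset_iff_union, compl_compl]
    exact hC
  obtain ⟨𝒱, hclosed, hσ, href, hcov⟩ := hX _ hα hcover
  refine ⟨{V ∈ 𝒱 | (V ∩ B).Nonempty}, fun V hV => hclosed V hV.1, hσ.mono (sep_subset _ _),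
    ?_, ?_⟩
  · rintro V ⟨hV, x, hxV, hxB⟩
    obtain ⟨U, rfl | hU, hVU⟩ := href V hV
    · exact absurd (@subset_closure X (alphaTop t) B x hxB) (hVU hxV)
    · exact ⟨U, hU, hVU⟩
  · intro x hxB
    obtain ⟨V, hV, hxV⟩ : x ∈ ⋃₀ 𝒱 := hcov ▸ mem_univ x
    exact ⟨V, ⟨hV, x, hxV, hxB⟩, hxV⟩

end AlphaOpen

/-- an `F_σ`-gα-closed subset of an α-subparacompact space is an
α-subparacompact subspace. -/
theorem alphaSubparacompact_of_FsigmaGAlphaClosed (T : TopologicalSpace X)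
    (hX : AlphaSubparacompact T) (A : Set X)
    (hA : ∃ B : ℕ → Set X, (∀ n, GAlphaClosed T (B n)) ∧ A = ⋃ n, B n) :
    AlphaSubparacompact (TopologicalSpace.induced (Subtype.val : A → X) T) := by
  let _ : TopologicalSpace X := T
  obtain ⟨B, hB, rfl⟩ := hA
  intro 𝒰 h𝒰 hcov
  set 𝒢 : Set (Set X) := {V | AlphaOpen T V ∧ Subtype.val ⁻¹' V ∈ 𝒰}
  have hB𝒢 : ∀ n, B n ⊆ ⋃₀ 𝒢 := fun n x hx => by
    obtain ⟨U, hU, hxU⟩ : ⟨x, mem_iUnion_of_mem n hx⟩ ∈ ⋃₀ 𝒰 := hcov ▸ mem_univ _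
    obtain ⟨V, hV, rfl⟩ := (h𝒰 U hU).exists_alphaOpen_preimage_val
    exact ⟨V, ⟨hV, hU⟩, hxU⟩
  choose 𝒱 hclosed hσ href hcov𝒱 using fun n =>
    (hB n).exists_sigmaDiscrete_closed_refinement hX (fun G hG => hG.1) (hB𝒢 n)
  refine ⟨⋃ n, Set.preimage Subtype.val '' 𝒱 n, ?_,
    SigmaDiscrete.iUnion fun n => (hσ n).preimage continuous_subtype_val, ?_, ?_⟩
  · simp only [mem_iUnion, mem_image]
    rintro _ ⟨n, V, hV, rfl⟩
    exact (hclosed n V hV).preimage continuous_subtype_val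
  · simp only [Refines, mem_iUnion, mem_image]
    rintro _ ⟨n, V, hV, rfl⟩
    obtain ⟨G, ⟨-, hG⟩, hVG⟩ := href n V hV
    exact ⟨_, hG, preimage_mono hVG⟩
  · refine eq_univ_of_forall fun ⟨x, hx⟩ => ?_
    obtain ⟨n, hxn⟩ := mem_iUnion.mp hx
    obtain ⟨V, hV, hxV⟩ := hcov𝒱 n hxn
    exact ⟨_, mem_iUnion_of_mem n (mem_image_of_mem _ hV), hxV⟩
end

section
/- If (X, 𝒯) is a Hausdorff α-paracompact space, then (X, 𝒯^α) is normal; moreover, 𝒯^α = 𝒯, i.e. every α-open subset of X is open. -/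
/-!
Open sets are α-open, so α-paracompactness gives in particular a locally finite open refinement
of every open cover: the space is paracompact, hence normal since it is Hausdorff. For
`𝒯^α = 𝒯`, take an α-open `A ∋ x` and refine the α-open cover `{A, {x}ᶜ}` by open sets: the
member of the refinement containing `x` cannot lie in `{x}ᶜ`, so it is an open neighbourhood
of `x` inside `A`.
-/

open Set TopologicalSpace

universe u v

variable {X : Type u} {Y : Type v}

theorem alphaOpen_of_isOpen [T : TopologicalSpace X] {U : Set X} (hU : IsOpen U) :
    AlphaOpen T U :=
  interior_maximal (hU.interior_eq.symm ▸ subset_closure) hU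

theorem LocFinite.locallyFinite_subtypeVal [T : TopologicalSpace X] {𝒱 : Set (Set X)}
    (h𝒱 : LocFinite T 𝒱) : LocallyFinite (Subtype.val : 𝒱 → Set X) := by
  intro x
  obtain ⟨N, hN, hfin⟩ := h𝒱 x
  exact ⟨N, hN, (hfin.preimage Subtype.val_injective.injOn).subset fun V hV => ⟨V.2, hV⟩⟩

theorem AlphaParacompact.paracompactSpace [T : TopologicalSpace X] (hpc : AlphaParacompact T) :
    ParacompactSpace X where
  locallyFinite_refinement ι s hs hcov := by
    obtain ⟨𝒱, hopen, hlf, href, h𝒱cov⟩ :=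
      hpc (range s) (forall_mem_range.2 fun i => alphaOpen_of_isOpen (hs i))
        (by rwa [sUnion_range])
    refine ⟨𝒱, Subtype.val, fun V => hopen V V.2, by rwa [← sUnion_eq_iUnion],
      hlf.locallyFinite_subtypeVal, fun V => ?_⟩
    obtain ⟨_, ⟨i, rfl⟩, hVi⟩ := href V V.2
    exact ⟨i, hVi⟩

theorem AlphaParacompact.isOpen_of_alphaOpen [T : TopologicalSpace X] [T1Space X]
    (hpc : AlphaParacompact T) {A : Set X} (hA : AlphaOpen T A) : IsOpen A := by
  refine isOpen_iff_mem_nhds.2 fun x hx => ?_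
  have hcov : ⋃₀ {A, {x}ᶜ} = univ := by
    rw [sUnion_pair, ← compl_subset_iff_union]
    exact compl_subset_compl.2 (singleton_subset_iff.2 hx)
  obtain ⟨𝒱, hopen, -, href, h𝒱cov⟩ := hpc {A, {x}ᶜ}
    (by
      rintro U (rfl | rfl)
      exacts [hA, alphaOpen_of_isOpen isOpen_compl_singleton]) hcov
  obtain ⟨V, hV, hxV⟩ := h𝒱cov.symm ▸ mem_univ x
  obtain ⟨U, rfl | rfl, hVU⟩ := href V hV
  · exact mem_nhds_iff.2 ⟨V, hVU, hopen V hV, hxV⟩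
  · exact (hVU hxV rfl).elim

theorem AlphaParacompact.alphaTop_eq [T : TopologicalSpace X] [T1Space X]
    (hpc : AlphaParacompact T) : alphaTop T = T :=
  TopologicalSpace.ext <| funext fun _ => propext
    ⟨hpc.isOpen_of_alphaOpen, alphaOpen_of_isOpen⟩

/-- if `(X, 𝒯)` is Hausdorff and α-paracompact, then `(X, 𝒯^α)` is
normal and moreover `𝒯^α = 𝒯`. -/
theorem normal_and_alphaTop_eq_of_t2_alphaParacompact (T : TopologicalSpace X)
    (hT2 : @T2Space X T) (hpc : AlphaParacompact T) :
    @NormalSpace X (alphaTop T) ∧ alphaTop T = T := by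
  let := T
  have := hpc.paracompactSpace
  have hαT := hpc.alphaTop_eq
  refine ⟨?_, hαT⟩
  rw [hαT]
  infer_instance
end

section
/- If (X, 𝒯) is Hausdorff and α-paracompact, then (X, 𝒯^α) is Hausdorff and paracompact. -/
open Set TopologicalSpace

universe u v

variable {X : Type u} {Y : Type v}

theorem alphaTop_le (T : TopologicalSpace X) : alphaTop T ≤ T := by
  let _ := T
  intro A (hA : IsOpen A)
  show A ⊆ interior (closure (interior A))
  rw [hA.interior_eq]
  exact interior_maximal subset_closure hA

theorem LocFinite.mono {t₁ t₂ : TopologicalSpace X} {𝒱 : Set (Set X)} (h : LocFinite t₂ 𝒱)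
    (hle : t₁ ≤ t₂) : LocFinite t₁ 𝒱 := fun x => by
  obtain ⟨N, hN, hfin⟩ := h x
  exact ⟨N, nhds_mono hle hN, hfin⟩

theorem LocFinite.locallyFinite_coe [t : TopologicalSpace X] {𝒱 : Set (Set X)}
    (h : LocFinite t 𝒱) : LocallyFinite ((↑) : 𝒱 → Set X) := fun x => by
  obtain ⟨N, hN, hfin⟩ := h x
  exact ⟨N, hN, (hfin.preimage Subtype.val_injective.injOn).subset fun V hV => ⟨V.2, hV⟩⟩

theorem paracompactSpace_of_locFinite_refinement [t : TopologicalSpace X]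
    (h : ∀ 𝒰 : Set (Set X), (∀ U ∈ 𝒰, IsOpen U) → ⋃₀ 𝒰 = univ →
      ∃ 𝒱 : Set (Set X), (∀ V ∈ 𝒱, IsOpen V) ∧ LocFinite t 𝒱 ∧ Refines 𝒱 𝒰 ∧ ⋃₀ 𝒱 = univ) :
    ParacompactSpace X := by
  refine ⟨fun ι s hs hcov => ?_⟩
  obtain ⟨𝒱, hopen, hlf, href, hcov𝒱⟩ :=
    h (range s) (forall_mem_range.2 hs) (by rwa [sUnion_range])
  refine ⟨𝒱, (↑), fun V => hopen V V.2, by rwa [← sUnion_eq_iUnion],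
    hlf.locallyFinite_coe, fun V => ?_⟩
  obtain ⟨_, ⟨i, rfl⟩, hV⟩ := href V V.2
  exact ⟨i, hV⟩

/-- if `(X, 𝒯)` is Hausdorff and α-paracompact, then `(X, 𝒯^α)` is
Hausdorff and paracompact. -/
theorem t2_paracompact_alphaTop_of_t2_alphaParacompact (T : TopologicalSpace X)
    (hT2 : @T2Space X T) (hpc : AlphaParacompact T) :
    @T2Space X (alphaTop T) ∧ @ParacompactSpace X (alphaTop T) := by
  have hle := alphaTop_le T
  refine ⟨t2Space_antitone hle hT2, @paracompactSpace_of_locFinite_refinement X (alphaTop T) ?_⟩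
  intro 𝒰 h𝒰 hcov
  obtain ⟨𝒱, hopen, hlf, href, hcov𝒱⟩ := hpc 𝒰 h𝒰 hcov
  exact ⟨𝒱, fun V hV => hle V (hopen V hV), hlf.mono hle, href, hcov𝒱⟩
end
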